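/- Let μ ∈ [−1, 1] and define F_μ : ℝ⁴ → ℝ⁴ by F_μ(x¹,x²,y¹,y²) = ((x¹)² + (x²)² + μ(y¹)² + μ(y²)², √(2(1−μ))(x¹y¹ − x²y²), √(2(1−μ))(x¹y² + x²y¹), √(1−μ²)((y¹)² + (y²)²)). Then for all (x¹,x²,y¹,y²) ∈ ℝ⁴, writing r² = (x¹)²+(x²)²+(y¹)²+(y²)²: (i) |F_μ|² = r⁴, so F_μ maps S³ into S³; (ii) |DF_μ|² = 4(2−μ)r²; and (iii) the Euclidean Laplacian ΔF_μ is the constant vector (4+4μ, 0, 0, 4√(1−μ²)), so |ΔF_μ|² = 32(1+μ). Consequently, the two conditions |DF_μ|² = 8r² and |ΔF_μ|² = 32 hold if and only if μ = 0. -/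

import Mathlib

/-!
STATEMENT 15: For μ ∈ [−1,1], the map F_μ : ℝ⁴ → ℝ⁴,
F_μ(x¹,x²,y¹,y²) = ((x¹)²+(x²)²+μ(y¹)²+μ(y²)², √(2(1−μ))(x¹y¹−x²y²),
√(2(1−μ))(x¹y²+x²y¹), √(1−μ²)((y¹)²+(y²)²)) satisfies, with
r² = (x¹)²+(x²)²+(y¹)²+(y²)²:
(i) |F_μ|² = r⁴ (so F_μ maps S³ into S³); (ii) |DF_μ|² = 4(2−μ)r²;
(iii) ΔF_μ = (4+4μ, 0, 0, 4√(1−μ²)), so |ΔF_μ|² = 32(1+μ).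
Consequently |DF_μ|² = 8r² everywhere and |ΔF_μ|² = 32 hold iff μ = 0.
-/

/-- Partial derivative of a map `ℝⁿ → ℝᵐ` in the `j`-th coordinate direction. -/
noncomputable def pd {n m : ℕ} (F : (Fin n → ℝ) → (Fin m → ℝ)) (j : Fin n)
    (x : Fin n → ℝ) : Fin m → ℝ :=
  fderiv ℝ F x (Pi.single j 1)

/-- Componentwise Euclidean Laplacian of a map `ℝⁿ → ℝᵐ`. -/
noncomputable def lap {n m : ℕ} (F : (Fin n → ℝ) → (Fin m → ℝ)) (x : Fin n → ℝ) :
    Fin m → ℝ :=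
  fun i => ∑ j, pd (pd F j) j x i

/-- Squared Frobenius norm of the total derivative of `F` at `x`. -/
noncomputable def frobSq {n m : ℕ} (F : (Fin n → ℝ) → (Fin m → ℝ)) (x : Fin n → ℝ) : ℝ :=
  ∑ i, ∑ j, (pd F j x i) ^ 2

/-- The map `F_μ(x¹,x²,y¹,y²) = ((x¹)²+(x²)²+μ(y¹)²+μ(y²)²,
√(2(1−μ))(x¹y¹−x²y²), √(2(1−μ))(x¹y²+x²y¹), √(1−μ²)((y¹)²+(y²)²))`,
with coordinates `(x¹,x²,y¹,y²) = (x 0, x 1, x 2, x 3)`. -/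
noncomputable def mapFmu (μ : ℝ) : (Fin 4 → ℝ) → Fin 4 → ℝ := fun x =>
  ![(x 0) ^ 2 + (x 1) ^ 2 + μ * (x 2) ^ 2 + μ * (x 3) ^ 2,
    Real.sqrt (2 * (1 - μ)) * (x 0 * x 2 - x 1 * x 3),
    Real.sqrt (2 * (1 - μ)) * (x 0 * x 3 + x 1 * x 2),
    Real.sqrt (1 - μ ^ 2) * ((x 2) ^ 2 + (x 3) ^ 2)]

/-! Every component of `F_μ` is a quadratic form `x ⬝ᵥ (Qᵢ *ᵥ x)`, so its partial derivatives
`∂ⱼ Fⁱ = ((Qᵢ + Qᵢᵀ) *ᵥ x) j` are linear: `|DF|²` is `∑ᵢ |(Qᵢ + Qᵢᵀ) x|²` and `ΔFⁱ` is the constant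
`2 tr Qᵢ`. What remains is polynomial algebra with `√(2(1−μ))² = 2(1−μ)` and `√(1−μ²)² = 1−μ²`;
finally `|ΔF_μ|² = 32(1+μ)` equals `32` only for `μ = 0`. -/

open Matrix

section QuadraticMaps

variable {n m : ℕ}

def quadMap (Q : Fin m → Matrix (Fin n) (Fin n) ℝ) (x : Fin n → ℝ) : Fin m → ℝ :=
  fun i => x ⬝ᵥ (Q i *ᵥ x)

lemma differentiable_dotProduct_mulVec_self (A : Matrix (Fin n) (Fin n) ℝ) :
    Differentiable ℝ (fun y : Fin n → ℝ => y ⬝ᵥ (A *ᵥ y)) := by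
  simp only [dotProduct, mulVec]
  fun_prop

lemma fderiv_dotProduct_mulVec_self_apply (A : Matrix (Fin n) (Fin n) ℝ) (x v : Fin n → ℝ) :
    fderiv ℝ (fun y => y ⬝ᵥ (A *ᵥ y)) x v = ((A + Aᵀ) *ᵥ x) ⬝ᵥ v := by
  let B : (Fin n → ℝ) →ₗ[ℝ] (Fin n → ℝ) →ₗ[ℝ] ℝ := Matrix.toLinearMap₂' ℝ A
  have hB : (fun y => y ⬝ᵥ (A *ᵥ y)) = fun y => B.toContinuousBilinearMap (id y) (id y) := by
    ext y
    simp only [B, id_eq, LinearMap.toContinuousBilinearMap_apply, toLinearMap₂'_apply']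
  rw [hB, B.toContinuousBilinearMap.fderiv_of_bilinear differentiableAt_id differentiableAt_id]
  simp only [B, _root_.add_apply, ContinuousLinearMap.precompR_apply,
    ContinuousLinearMap.precompL_apply, ContinuousLinearMap.compL_apply, fderiv_id,
    ContinuousLinearMap.comp_id, ContinuousLinearMap.id_apply, id_eq,
    LinearMap.toContinuousBilinearMap_apply, toLinearMap₂'_apply']
  rw [add_mulVec, add_dotProduct, mulVec_transpose, dotProduct_mulVec, dotProduct_comm v, add_comm]

lemma pd_mulVec (M : Matrix (Fin m) (Fin n) ℝ) (j : Fin n) (x : Fin n → ℝ) :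
    pd (fun y => M *ᵥ y) j x = fun i => M i j := by
  rw [pd, show (fun y => M *ᵥ y) = ⇑(LinearMap.toContinuousLinearMap (Matrix.mulVecLin M)) from rfl,
    ContinuousLinearMap.fderiv]
  ext i
  simp

lemma pd_quadMap (Q : Fin m → Matrix (Fin n) (Fin n) ℝ) (j : Fin n) :
    pd (quadMap Q) j = fun x => Matrix.of (fun i k => Q i j k + Q i k j) *ᵥ x := by
  ext x i
  unfold pd quadMap
  rw [fderiv_pi fun i => (differentiable_dotProduct_mulVec_self (Q i)).differentiableAt]
  simp only [ContinuousLinearMap.pi_apply, fderiv_dotProduct_mulVec_self_apply,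
    dotProduct_single, mul_one]
  rfl

lemma frobSq_quadMap (Q : Fin m → Matrix (Fin n) (Fin n) ℝ) (x : Fin n → ℝ) :
    frobSq (quadMap Q) x = ∑ i, ∑ j, ((Q i + (Q i)ᵀ) *ᵥ x) j ^ 2 := by
  simp only [frobSq, pd_quadMap]
  rfl

lemma lap_quadMap (Q : Fin m → Matrix (Fin n) (Fin n) ℝ) (x : Fin n → ℝ) (i : Fin m) :
    lap (quadMap Q) x i = 2 * (Q i).trace := by
  simp only [lap, pd_quadMap, pd_mulVec, of_apply, trace, diag, ← two_mul, Finset.mul_sum]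

end QuadraticMaps

noncomputable def coeffFmu (μ : ℝ) : Fin 4 → Matrix (Fin 4) (Fin 4) ℝ :=
  let a := Real.sqrt (2 * (1 - μ)); let b := Real.sqrt (1 - μ ^ 2)
  ![!![1, 0, 0, 0; 0, 1, 0, 0; 0, 0, μ, 0; 0, 0, 0, μ],
    !![0, 0, a, 0; 0, 0, 0, -a; 0, 0, 0, 0; 0, 0, 0, 0],
    !![0, 0, 0, a; 0, 0, a, 0; 0, 0, 0, 0; 0, 0, 0, 0],
    !![0, 0, 0, 0; 0, 0, 0, 0; 0, 0, b, 0; 0, 0, 0, b]]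

lemma mapFmu_eq_quadMap (μ : ℝ) : mapFmu μ = quadMap (coeffFmu μ) := by
  ext x i
  fin_cases i <;>
    simp [mapFmu, quadMap, coeffFmu, dotProduct, mulVec, Fin.sum_univ_four] <;> ring

section

variable {μ : ℝ}

lemma sq_sqrt_two_mul_one_sub (h : μ ≤ 1) : Real.sqrt (2 * (1 - μ)) ^ 2 = 2 * (1 - μ) :=
  Real.sq_sqrt (by linarith)

lemma sq_sqrt_one_sub_sq (h₁ : -1 ≤ μ) (h₂ : μ ≤ 1) : Real.sqrt (1 - μ ^ 2) ^ 2 = 1 - μ ^ 2 :=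
  Real.sq_sqrt (by nlinarith)

lemma sum_sq_mapFmu (h₁ : -1 ≤ μ) (h₂ : μ ≤ 1) (x : Fin 4 → ℝ) :
    ∑ i, mapFmu μ x i ^ 2 = (∑ j, x j ^ 2) ^ 2 := by
  simp only [mapFmu, Fin.sum_univ_four, cons_val_zero, cons_val_one, cons_val, mul_pow]
  linear_combination ((x 0 * x 2 - x 1 * x 3) ^ 2 + (x 0 * x 3 + x 1 * x 2) ^ 2) *
      sq_sqrt_two_mul_one_sub h₂ + (x 2 ^ 2 + x 3 ^ 2) ^ 2 * sq_sqrt_one_sub_sq h₁ h₂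

lemma frobSq_mapFmu (h₁ : -1 ≤ μ) (h₂ : μ ≤ 1) (x : Fin 4 → ℝ) :
    frobSq (mapFmu μ) x = 4 * (2 - μ) * ∑ j, x j ^ 2 := by
  rw [mapFmu_eq_quadMap, frobSq_quadMap]
  simp only [coeffFmu, mulVec, dotProduct, Matrix.add_apply, transpose_apply, Fin.sum_univ_four,
    of_apply, cons_val', cons_val_zero, cons_val_one, cons_val, cons_val_fin_one]
  linear_combination 2 * (x 0 ^ 2 + x 1 ^ 2 + x 2 ^ 2 + x 3 ^ 2) * sq_sqrt_two_mul_one_sub h₂ +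
    4 * (x 2 ^ 2 + x 3 ^ 2) * sq_sqrt_one_sub_sq h₁ h₂

lemma lap_mapFmu (x : Fin 4 → ℝ) (i : Fin 4) :
    lap (mapFmu μ) x i = ![4 + 4 * μ, 0, 0, 4 * Real.sqrt (1 - μ ^ 2)] i := by
  rw [mapFmu_eq_quadMap, lap_quadMap]
  fin_cases i <;> simp [coeffFmu, trace, Fin.sum_univ_four] <;> ring

lemma sum_sq_lap_mapFmu (h₁ : -1 ≤ μ) (h₂ : μ ≤ 1) (x : Fin 4 → ℝ) :
    ∑ i, lap (mapFmu μ) x i ^ 2 = 32 * (1 + μ) := by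
  simp only [lap_mapFmu, Fin.sum_univ_four, cons_val_zero, cons_val_one, cons_val]
  linear_combination 16 * sq_sqrt_one_sub_sq h₁ h₂

end

theorem stmt15 (μ : ℝ) (hμ : -1 ≤ μ ∧ μ ≤ 1) :
    (∀ x : Fin 4 → ℝ, ∑ i, (mapFmu μ x i) ^ 2 = (∑ j, (x j) ^ 2) ^ 2) ∧
    (∀ x : Fin 4 → ℝ, frobSq (mapFmu μ) x = 4 * (2 - μ) * ∑ j, (x j) ^ 2) ∧
    (∀ (x : Fin 4 → ℝ) (i : Fin 4),
      lap (mapFmu μ) x i = ![4 + 4 * μ, 0, 0, 4 * Real.sqrt (1 - μ ^ 2)] i) ∧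
    (∀ x : Fin 4 → ℝ, ∑ i, (lap (mapFmu μ) x i) ^ 2 = 32 * (1 + μ)) ∧
    (((∀ x : Fin 4 → ℝ, frobSq (mapFmu μ) x = 8 * ∑ j, (x j) ^ 2) ∧
        (∀ x : Fin 4 → ℝ, ∑ i, (lap (mapFmu μ) x i) ^ 2 = 32)) ↔ μ = 0) := by
  obtain ⟨h₁, h₂⟩ := hμ
  refine ⟨sum_sq_mapFmu h₁ h₂, frobSq_mapFmu h₁ h₂, lap_mapFmu, sum_sq_lap_mapFmu h₁ h₂, ?_⟩
  constructor
  · rintro ⟨-, hlap⟩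
    linarith [(sum_sq_lap_mapFmu h₁ h₂ 0).symm.trans (hlap 0)]
  · rintro rfl
    constructor
    · intro x
      rw [frobSq_mapFmu h₁ h₂]
      ring
    · intro x
      rw [sum_sq_lap_mapFmu h₁ h₂]
      ring
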